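/- arXiv:2509.04972 — 12 statements merged into one kernel-verified Lean document; each statement's English description precedes it below -/
import Mathlib

section
/- Let n ≥ 1 be an integer, λ ∈ ℝ, and let I ⊆ ℝ be an open interval. Suppose x, k, α : I → ℝ are functions with x and k differentiable, x(s) > 0 for all s ∈ I, and suppose that on I the equations x' = α·x and k' = (l − 2k)·α hold, where l := 2nλ − (2n−2)·k (i.e., the p-mean curvature H := (2n−2)k + l is constant equal to 2nλ). Then the function E(s) := (λ − k(s))·x(s)^{2n} is constant on I. -/
/-- Let `n ≥ 1`, `lam ∈ ℝ`, and let `I = Ioo a b` be an open interval.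
If `x, k, α : ℝ → ℝ` with `x, k` differentiable on `I`, `x > 0` on `I`, and on `I` we have
`x' = α·x` and `k' = (l − 2k)·α` where `l := 2n·lam − (2n−2)·k`, then
`E(s) := (lam − k s)·(x s)^(2n)` is constant on `I`. -/
theorem energy_constant_of_constant_pmean_curvature
    (n : ℕ) (hn : 1 ≤ n) (lam : ℝ) (a b : ℝ)
    (x k α : ℝ → ℝ)
    (hxpos : ∀ s ∈ Set.Ioo a b, 0 < x s)
    (hx : ∀ s ∈ Set.Ioo a b, HasDerivAt x (α s * x s) s)
    (hk : ∀ s ∈ Set.Ioo a b,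
      HasDerivAt k
        (((2 * (n : ℝ) * lam - (2 * (n : ℝ) - 2) * k s) - 2 * k s) * α s) s) :
    ∀ s ∈ Set.Ioo a b, ∀ s' ∈ Set.Ioo a b,
      (lam - k s) * x s ^ (2 * n) = (lam - k s') * x s' ^ (2 * n) := by
  set E : ℝ → ℝ := fun s => (lam - k s) * x s ^ (2 * n) with hE
  have hE0 : ∀ s ∈ Set.Ioo a b, HasDerivAt E 0 s := by
    intro s hs
    have h1 := ((hasDerivAt_const s lam).sub (hk s hs)).mul ((hx s hs).pow (2 * n))
    convert h1 using 1
    iterate 3 rfl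
    push_cast
    have hxp : x s ^ (2 * n) = x s ^ (2 * n - 1) * x s := by
      rw [← pow_succ]
      congr 1
      omega
    simp only [Pi.pow_apply, Pi.sub_apply]
    rw [hxp]
    ring
  intro s hs s' hs'
  have hconv : Convex ℝ (Set.Ioo a b) := convex_Ioo a b
  have hdiff : DifferentiableOn ℝ E (Set.Ioo a b) := fun z hz =>
    ((hE0 z hz).differentiableAt).differentiableWithinAt
  have hfderiv : ∀ z ∈ Set.Ioo a b, fderivWithin ℝ E (Set.Ioo a b) z = 0 := by
    intro z hz
    have := ((hE0 z hz).hasFDerivAt.hasFDerivWithinAt).fderivWithin (isOpen_Ioo.uniqueDiffOn z hz)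
    rw [this]
    ext t
    simp
  exact hconv.is_const_of_fderivWithin_eq_zero hdiff hfderiv hs hs'
end

section
/- Let n ≥ 1 be an integer and I ⊆ ℝ an open interval. Suppose x, k, l, α : I → ℝ with x, k, l differentiable, x > 0 on I, and suppose x' = α·x and k' = (l − 2k)·α hold on I. Set λ := ((2n−2)k + l)/(2n) and E := (λ − k)·x^{2n}. Then E' = λ'·x^{2n} on I; in particular, E is constant on I if and only if the p-mean curvature H := (2n−2)k + l is constant on I. -/
/-- If a function has derivative `0` at every point of `Ioo a b`, it is constant there. -/
lemma const_of_deriv_zero_Ioo {a b : ℝ} {f : ℝ → ℝ}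
    (hf : ∀ s ∈ Set.Ioo a b, HasDerivAt f 0 s) :
    ∀ s ∈ Set.Ioo a b, ∀ s' ∈ Set.Ioo a b, f s = f s' := by
  intro s hs s' hs'
  refine (convex_Ioo a b).is_const_of_fderivWithin_eq_zero
    (fun t ht => ((hf t ht).differentiableAt).differentiableWithinAt) ?_ hs hs'
  intro t ht
  rw [fderivWithin_of_isOpen isOpen_Ioo ht, (hf t ht).hasFDerivAt.fderiv]
  ext
  simp

/-- If a function is constant on an open set and has a derivative at a point of it,
that derivative is `0`. -/
lemma deriv_zero_of_const_Ioo {a b : ℝ} {f : ℝ → ℝ} {d s : ℝ} (hs : s ∈ Set.Ioo a b)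
    (hconst : ∀ t ∈ Set.Ioo a b, ∀ t' ∈ Set.Ioo a b, f t = f t')
    (hd : HasDerivAt f d s) : d = 0 := by
  have hev : (fun _ : ℝ => f s) =ᶠ[nhds s] f := by
    filter_upwards [isOpen_Ioo.mem_nhds hs] with t ht
    exact (hconst s hs t ht)
  have h0 : HasDerivAt f 0 s := (hasDerivAt_const s (f s)).congr_of_eventuallyEq hev.symm
  exact hd.unique h0

/-- On an open interval `I = Ioo a b`, suppose `x, k, l` are differentiable,
`x > 0`, `x' = α·x` and `k' = (l − 2k)·α`. With `lam := ((2n−2)k + l)/(2n)` and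
`E := (lam − k)·x^(2n)`, we have `E' = lam'·x^(2n)` on `I`; in particular `E` is constant
on `I` iff the p-mean curvature `H := (2n−2)k + l` is constant on `I`. -/
theorem energy_deriv_and_constancy_iff
    (n : ℕ) (hn : 1 ≤ n) (a b : ℝ)
    (x k l α l' : ℝ → ℝ)
    (hxpos : ∀ s ∈ Set.Ioo a b, 0 < x s)
    (hx : ∀ s ∈ Set.Ioo a b, HasDerivAt x (α s * x s) s)
    (hk : ∀ s ∈ Set.Ioo a b, HasDerivAt k ((l s - 2 * k s) * α s) s)
    (hl : ∀ s ∈ Set.Ioo a b, HasDerivAt l (l' s) s) :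
    (∀ s ∈ Set.Ioo a b,
      HasDerivAt
        (fun s => (((2 * (n : ℝ) - 2) * k s + l s) / (2 * (n : ℝ)) - k s) * x s ^ (2 * n))
        ((((2 * (n : ℝ) - 2) * ((l s - 2 * k s) * α s) + l' s) / (2 * (n : ℝ)))
          * x s ^ (2 * n)) s) ∧
    ((∀ s ∈ Set.Ioo a b, ∀ s' ∈ Set.Ioo a b,
        (((2 * (n : ℝ) - 2) * k s + l s) / (2 * (n : ℝ)) - k s) * x s ^ (2 * n)
          = (((2 * (n : ℝ) - 2) * k s' + l s') / (2 * (n : ℝ)) - k s') * x s' ^ (2 * n)) ↔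
      (∀ s ∈ Set.Ioo a b, ∀ s' ∈ Set.Ioo a b,
        (2 * (n : ℝ) - 2) * k s + l s = (2 * (n : ℝ) - 2) * k s' + l s')) := by
  have hN : (2 * (n : ℝ)) ≠ 0 := by positivity
  -- Part 1: the derivative formula
  have part1 : ∀ s ∈ Set.Ioo a b,
      HasDerivAt
        (fun s => (((2 * (n : ℝ) - 2) * k s + l s) / (2 * (n : ℝ)) - k s) * x s ^ (2 * n))
        ((((2 * (n : ℝ) - 2) * ((l s - 2 * k s) * α s) + l' s) / (2 * (n : ℝ)))
          * x s ^ (2 * n)) s := by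
    intro s hs
    have h1 : HasDerivAt
        (fun s => ((2 * (n : ℝ) - 2) * k s + l s) / (2 * (n : ℝ)) - k s)
        (((2 * (n : ℝ) - 2) * ((l s - 2 * k s) * α s) + l' s) / (2 * (n : ℝ))
          - (l s - 2 * k s) * α s) s :=
      ((((hk s hs).const_mul (2 * (n : ℝ) - 2)).add (hl s hs)).div_const _).sub (hk s hs)
    have h2 : HasDerivAt (fun s => x s ^ (2 * n))
        ((2 * n : ℕ) * x s ^ (2 * n - 1) * (α s * x s)) s := (hx s hs).pow (2 * n)
    have hpow : x s ^ (2 * n - 1) * x s = x s ^ (2 * n) := by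
      rw [← pow_succ]; congr 1; omega
    have := h1.mul h2
    convert this using 1
    · rfl
    · rfl
    · rfl
    rw [show ((2 * n : ℕ) : ℝ) * x s ^ (2 * n - 1) * (α s * x s)
        = 2 * (n : ℝ) * α s * x s ^ (2 * n) by push_cast; rw [← hpow]; ring]
    field_simp
    ring
  refine ⟨part1, ?_⟩
  -- Part 2: constancy equivalence
  have hH : ∀ s ∈ Set.Ioo a b,
      HasDerivAt (fun s => (2 * (n : ℝ) - 2) * k s + l s)
        ((2 * (n : ℝ) - 2) * ((l s - 2 * k s) * α s) + l' s) s := by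
    intro s hs
    exact ((hk s hs).const_mul (2 * (n : ℝ) - 2)).add (hl s hs)
  constructor
  · intro hE s hs s' hs'
    have hzero : ∀ t ∈ Set.Ioo a b,
        HasDerivAt (fun s => (2 * (n : ℝ) - 2) * k s + l s) 0 t := by
      intro t ht
      have hdE := deriv_zero_of_const_Ioo ht hE (part1 t ht)
      have hxne : x t ^ (2 * n) ≠ 0 := pow_ne_zero _ (hxpos t ht).ne'
      have hlam : ((2 * (n : ℝ) - 2) * ((l t - 2 * k t) * α t) + l' t) / (2 * (n : ℝ)) = 0 :=
        by
          rcases mul_eq_zero.mp hdE with h | h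
          · exact h
          · exact absurd h hxne
      have : (2 * (n : ℝ) - 2) * ((l t - 2 * k t) * α t) + l' t = 0 := by
        field_simp at hlam; linarith [hlam]
      rw [← this]
      exact hH t ht
    exact const_of_deriv_zero_Ioo hzero s hs s' hs'
  · intro hHconst s hs s' hs'
    have hzero : ∀ t ∈ Set.Ioo a b,
        HasDerivAt
          (fun s => (((2 * (n : ℝ) - 2) * k s + l s) / (2 * (n : ℝ)) - k s) * x s ^ (2 * n))
          0 t := by
      intro t ht
      have hdH := deriv_zero_of_const_Ioo ht hHconst (hH t ht)
      have h0 : (((2 * (n : ℝ) - 2) * ((l t - 2 * k t) * α t) + l' t) / (2 * (n : ℝ)))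
          * x t ^ (2 * n) = 0 := by rw [hdH]; simp
      rw [← h0]
      exact part1 t ht
    exact const_of_deriv_zero_Ioo hzero s hs s' hs'
end

section
/- Let I ⊆ ℝ be an open interval, x : I → ℝ twice differentiable with x > 0 on I, and k : I → ℝ differentiable. Set α := x'/x, and suppose α² + k² = 1/x² on I. Define l := k + (α·k' − k·α')·x². Then on I the identities k' = (l − 2k)·α and α' = k² − k·l − α² hold. -/
/-- On an open interval `I = Ioo a b`, let `x` be twice differentiable with
`x > 0` and `k` differentiable. Set `α := x'/x` (with derivative `α'`) and suppose
`α² + k² = 1/x²` on `I`. With `l := k + (α·k' − k·α')·x²`, the identities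
`k' = (l − 2k)·α` and `α' = k² − k·l − α²` hold on `I`. -/
theorem codazzi_like_identities
    (a b : ℝ) (x x' x'' k k' α' : ℝ → ℝ)
    (hxpos : ∀ s ∈ Set.Ioo a b, 0 < x s)
    (hx : ∀ s ∈ Set.Ioo a b, HasDerivAt x (x' s) s)
    (hx' : ∀ s ∈ Set.Ioo a b, HasDerivAt x' (x'' s) s)
    (hk : ∀ s ∈ Set.Ioo a b, HasDerivAt k (k' s) s)
    (hα' : ∀ s ∈ Set.Ioo a b, HasDerivAt (fun s => x' s / x s) (α' s) s)
    (hnorm : ∀ s ∈ Set.Ioo a b, (x' s / x s) ^ 2 + k s ^ 2 = 1 / x s ^ 2) :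
    ∀ s ∈ Set.Ioo a b,
      k' s = ((k s + ((x' s / x s) * k' s - k s * α' s) * x s ^ 2) - 2 * k s)
          * (x' s / x s) ∧
      α' s = k s ^ 2
          - k s * (k s + ((x' s / x s) * k' s - k s * α' s) * x s ^ 2)
          - (x' s / x s) ^ 2 := by
  intro s hs
  have hxne : x s ≠ 0 := (hxpos s hs).ne'
  have hx2ne : x s ^ 2 ≠ 0 := pow_ne_zero 2 hxne
  -- derivative of the left side of the constraint
  have h1 : HasDerivAt (fun t => (x' t / x t) ^ 2 + k t ^ 2)
      (2 * (x' s / x s) * α' s + 2 * k s * k' s) s := by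
    have := ((hα' s hs).fun_pow 2).fun_add ((hk s hs).fun_pow 2)
    simpa [mul_comm, mul_assoc, mul_left_comm] using this
  -- derivative of the right side of the constraint
  have h2 : HasDerivAt (fun t => 1 / x t ^ 2)
      (-(2 * x s * x' s) / (x s ^ 2) ^ 2) s := by
    have := ((hx s hs).fun_pow 2).inv hx2ne
    simpa [one_div, mul_comm, mul_assoc, mul_left_comm, Pi.inv_def] using this
  have heq : (fun t => (x' t / x t) ^ 2 + k t ^ 2) =ᶠ[nhds s] (fun t => 1 / x t ^ 2) :=
    Filter.eventuallyEq_of_mem (isOpen_Ioo.mem_nhds hs) (fun t ht => hnorm t ht)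
  have h2' : HasDerivAt (fun t => (x' t / x t) ^ 2 + k t ^ 2)
      (-(2 * x s * x' s) / (x s ^ 2) ^ 2) s := h2.congr_of_eventuallyEq heq
  have hd : 2 * (x' s / x s) * α' s + 2 * k s * k' s
      = -(2 * x s * x' s) / (x s ^ 2) ^ 2 := h1.unique h2'
  have hn := hnorm s hs
  field_simp at hd hn
  have hd2 : x' s * α' s * x s ^ 2 + k s * k' s * x s ^ 3 + x' s = 0 := by
    have h2x : (2 * x s ^ 2) * (x' s * α' s * x s ^ 2 + k s * k' s * x s ^ 3 + x' s)
        = (2 * x s ^ 2) * 0 := by linear_combination (2 * x s ^ 2) * hd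
    exact mul_left_cancel₀ (by positivity) h2x
  constructor
  · field_simp
    linear_combination k s * hd - k' s * x s * hn
  · field_simp
    linear_combination x' s * hd - α' s * x s ^ 2 * hn
end

section
/- Let I ⊆ ℝ be an open interval and ᾱ, k̄ : I → ℝ functions with ᾱ² + k̄² > 0 on I. Suppose x, t : I → ℝ are differentiable with x > 0 and satisfy x' = ᾱ·x, t' = −k̄·x², and (x·x')² + (t')² = x² on I. Then necessarily x = 1/√(ᾱ² + k̄²) on I. Consequently, if (x₁, t₁) and (x₂, t₂) are two such pairs, then x₁ = x₂ on I and t₁ − t₂ is constant on I; i.e., the generating curve with prescribed invariants ᾱ, k̄ and horizontal arc-length parameter is unique up to a translation along the t-axis. -/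
/-- On an open interval `I = Ioo a b`, let `α, k` satisfy `α² + k² > 0`.
If `x, t` are differentiable with `x > 0`, `x' = α·x`, `t' = −k·x²` and
`(x·x')² + (t')² = x²` on `I`, then `x = 1/√(α² + k²)` on `I`. Consequently, for two such
pairs `(x₁, t₁)`, `(x₂, t₂)`, we have `x₁ = x₂` on `I` and `t₁ − t₂` is constant on `I`. -/
theorem generating_curve_uniqueness
    (a b : ℝ) (α k : ℝ → ℝ)
    (hpos : ∀ s ∈ Set.Ioo a b, 0 < α s ^ 2 + k s ^ 2)
    (x₁ t₁ x₂ t₂ : ℝ → ℝ)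
    (hx₁pos : ∀ s ∈ Set.Ioo a b, 0 < x₁ s)
    (hx₁ : ∀ s ∈ Set.Ioo a b, HasDerivAt x₁ (α s * x₁ s) s)
    (ht₁ : ∀ s ∈ Set.Ioo a b, HasDerivAt t₁ (-k s * x₁ s ^ 2) s)
    (hn₁ : ∀ s ∈ Set.Ioo a b,
      (x₁ s * (α s * x₁ s)) ^ 2 + (-k s * x₁ s ^ 2) ^ 2 = x₁ s ^ 2)
    (hx₂pos : ∀ s ∈ Set.Ioo a b, 0 < x₂ s)
    (hx₂ : ∀ s ∈ Set.Ioo a b, HasDerivAt x₂ (α s * x₂ s) s)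
    (ht₂ : ∀ s ∈ Set.Ioo a b, HasDerivAt t₂ (-k s * x₂ s ^ 2) s)
    (hn₂ : ∀ s ∈ Set.Ioo a b,
      (x₂ s * (α s * x₂ s)) ^ 2 + (-k s * x₂ s ^ 2) ^ 2 = x₂ s ^ 2) :
    (∀ s ∈ Set.Ioo a b, x₁ s = 1 / Real.sqrt (α s ^ 2 + k s ^ 2)) ∧
    (∀ s ∈ Set.Ioo a b, x₁ s = x₂ s) ∧
    (∀ s ∈ Set.Ioo a b, ∀ s' ∈ Set.Ioo a b, t₁ s - t₂ s = t₁ s' - t₂ s') := by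
  -- key formula: x = 1/√(α²+k²)
  have key : ∀ (x : ℝ → ℝ), (∀ s ∈ Set.Ioo a b, 0 < x s) →
      (∀ s ∈ Set.Ioo a b,
        (x s * (α s * x s)) ^ 2 + (-k s * x s ^ 2) ^ 2 = x s ^ 2) →
      ∀ s ∈ Set.Ioo a b, x s = 1 / Real.sqrt (α s ^ 2 + k s ^ 2) := by
    intro x hxp hn s hs
    have hx := hxp s hs
    have hp := hpos s hs
    have h := hn s hs
    have hx2 : (0:ℝ) < x s ^ 2 := by positivity
    have h3 : x s ^ 2 * (x s ^ 2 * (α s ^ 2 + k s ^ 2) - 1) = 0 := by linear_combination h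
    have hsq : x s ^ 2 * (α s ^ 2 + k s ^ 2) = 1 := by
      rcases mul_eq_zero.mp h3 with h4 | h4
      · exact absurd h4 (ne_of_gt hx2)
      · linarith
    have hsqrt : Real.sqrt (α s ^ 2 + k s ^ 2) > 0 := Real.sqrt_pos.mpr hp
    have hsq2 : Real.sqrt (α s ^ 2 + k s ^ 2) ^ 2 = α s ^ 2 + k s ^ 2 := Real.sq_sqrt hp.le
    have hy2 : (x s * Real.sqrt (α s ^ 2 + k s ^ 2)) ^ 2 = 1 := by
      rw [mul_pow, hsq2]; exact hsq
    have hypos : 0 < x s * Real.sqrt (α s ^ 2 + k s ^ 2) := mul_pos hx hsqrt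
    have h1 : x s * Real.sqrt (α s ^ 2 + k s ^ 2) = 1 := by nlinarith [hy2, hypos]
    field_simp
    linarith [h1]
  have k1 := key x₁ hx₁pos hn₁
  have k2 := key x₂ hx₂pos hn₂
  have heq : ∀ s ∈ Set.Ioo a b, x₁ s = x₂ s := fun s hs => (k1 s hs).trans (k2 s hs).symm
  refine ⟨k1, heq, ?_⟩
  intro s hs s' hs'
  have hderiv : ∀ u ∈ Set.Ioo a b,
      HasDerivWithinAt (fun r => t₁ r - t₂ r) 0 (Set.Ioo a b) u := by
    intro u hu
    have h := (ht₁ u hu).sub (ht₂ u hu)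
    have : -k u * x₁ u ^ 2 - -k u * x₂ u ^ 2 = 0 := by rw [heq u hu]; ring
    rw [this] at h
    exact h.hasDerivWithinAt
  have := (convex_Ioo a b).norm_image_sub_le_of_norm_hasDerivWithin_le
    (f' := fun _ => (0:ℝ)) (C := 0) hderiv (fun u _ => by simp) hs' hs
  simp at this
  have : (t₁ s - t₂ s) - (t₁ s' - t₂ s') = 0 := by
    have habs : |(t₁ s - t₂ s) - (t₁ s' - t₂ s')| ≤ 0 := by
      simpa [Real.norm_eq_abs, sub_sub_sub_comm] using this
    exact abs_nonpos_iff.mp habs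
  linarith
end

section
/- Let n ≥ 1 be an integer, c > 0 and E ∈ ℝ. If there exists a real number x₀ > 0 such that x₀²·(E/x₀^{2n} − c/(2n))² ≤ 1, then E ≥ −(1/(2n))·((2n−1)/c)^{2n−1}. -/
/-- Let `n ≥ 1`, `c > 0` and `E ∈ ℝ`. If there is `x₀ > 0` with
`x₀²·(E/x₀^(2n) − c/(2n))² ≤ 1`, then `E ≥ −(1/(2n))·((2n−1)/c)^(2n−1)`. -/
theorem energy_lower_bound
    (n : ℕ) (hn : 1 ≤ n) (c E : ℝ) (hc : 0 < c)
    (h : ∃ x₀ : ℝ, 0 < x₀ ∧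
      x₀ ^ 2 * (E / x₀ ^ (2 * n) - c / (2 * (n : ℝ))) ^ 2 ≤ 1) :
    E ≥ -(1 / (2 * (n : ℝ))) * ((2 * (n : ℝ) - 1) / c) ^ (2 * n - 1) := by
  obtain ⟨x, hx, hle⟩ := h
  set k := 2 * n with hk
  have hk2 : 2 ≤ k := by omega
  have hkR : (2:ℝ) ≤ (k:ℝ) := by exact_mod_cast hk2
  have hkpos : (0:ℝ) < k := by linarith
  have hk1 : ((k - 1 : ℕ) : ℝ) = (k:ℝ) - 1 := by
    push_cast [Nat.cast_sub (by omega : 1 ≤ k)]; ring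
  have hxk : (0:ℝ) < x ^ k := pow_pos hx k
  rw [show (2 * (n:ℝ)) = (k:ℝ) by push_cast [hk]; ring] at hle
  have hxk1 : (0:ℝ) < x ^ (k-1) := pow_pos hx (k-1)
  have hxx : x ^ (k-1) * x = x ^ k := by
    rw [← pow_succ]; congr 1; omega
  -- lower bound on E in terms of x
  have h1 : -1 ≤ x * (E / x ^ k - c / (k:ℝ)) := by
    nlinarith [sq_nonneg (x * (E / x ^ k - c / (k:ℝ)) + 1)]
  have h2 : E ≥ c / (k:ℝ) * x ^ k - x ^ (k - 1) := by
    have h2' := mul_le_mul_of_nonneg_left h1 hxk1.le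
    have e : x ^ (k-1) * (x * (E / x ^ k - c / (k:ℝ))) = E - c / (k:ℝ) * x ^ k := by
      rw [← mul_assoc, hxx, mul_sub, mul_div_cancel₀ _ hxk.ne']; ring
    rw [e, mul_neg_one] at h2'
    linarith
  obtain ⟨m, hm⟩ : ∃ m : ℝ, m = ((k:ℝ) - 1) / c := ⟨_, rfl⟩
  have hmpos : 0 < m := hm ▸ div_pos (by linarith) hc
  have hcm : c * m = (k:ℝ) - 1 := by rw [hm]; field_simp
  -- Young's inequality
  have hpq : Real.HolderConjugate ((k:ℝ)/((k:ℝ)-1)) (k:ℝ) := by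
    rw [Real.holderConjugate_iff]
    constructor
    · rw [lt_div_iff₀ (by linarith)]; linarith
    · rw [inv_div]; field_simp; ring
  have hy := Real.young_inequality_of_nonneg (pow_nonneg hx.le (k-1)) hmpos.le hpq
  have ha : (x ^ (k-1) : ℝ) ^ ((k:ℝ)/((k:ℝ)-1)) = x ^ k := by
    rw [← Real.rpow_natCast x (k-1), ← Real.rpow_mul hx.le, hk1]
    rw [mul_div_cancel₀ _ (by linarith : (k:ℝ) - 1 ≠ 0)]
    exact Real.rpow_natCast x k
  have hb : (m : ℝ) ^ ((k:ℝ)) = m ^ k := Real.rpow_natCast m k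
  rw [ha, hb] at hy
  have hy' : (k:ℝ) * (x ^ (k-1) * m) ≤ ((k:ℝ) - 1) * x ^ k + m ^ k := by
    have e2 : x ^ k / ((k:ℝ)/((k:ℝ)-1)) = ((k:ℝ)-1) * x ^ k / k := by
      rw [div_div_eq_mul_div]; ring
    rw [e2, ← add_div] at hy
    calc (k:ℝ) * (x ^ (k-1) * m) ≤ (k:ℝ) * ((((k:ℝ)-1) * x ^ k + m ^ k) / k) :=
          mul_le_mul_of_nonneg_left hy hkpos.le
      _ = ((k:ℝ) - 1) * x ^ k + m ^ k := by field_simp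
  have hmk : m ^ k = m ^ (k-1) * m := by rw [← pow_succ]; congr 1; omega
  have hkm : 0 < (k:ℝ) * m := by positivity
  have t1 : (k:ℝ)*m*E ≥ (k:ℝ)*m*(c/(k:ℝ)*x^k - x^(k-1)) :=
    mul_le_mul_of_nonneg_left h2 hkm.le
  have t2 : (k:ℝ)*m*(c/(k:ℝ)*x^k - x^(k-1)) = c*m*x^k - (k:ℝ)*(x^(k-1)*m) := by
    field_simp
  have t3 : (k:ℝ)*m*E ≥ -(m ^ k) := by
    rw [t2, hcm] at t1
    linarith
  have goal' : E ≥ -(1 / (k:ℝ)) * m ^ (k - 1) := by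
    rw [ge_iff_le, show -(1 / (k:ℝ)) * m ^ (k-1) = -(m ^ k) / ((k:ℝ)*m) by
      rw [hmk]; field_simp]
    rw [div_le_iff₀ hkm]
    linarith [t3]
  have hgoal : ((2 * (n:ℝ) - 1) / c) = m := by rw [hm]; push_cast [hk]; ring
  have hexp : 2 * n - 1 = k - 1 := by omega
  rw [hexp, hgoal]
  have : (2 * (n:ℝ)) = (k:ℝ) := by push_cast [hk]; ring
  rw [this]
  exact goal'
end

section
/- Let n ≥ 1 be an integer and c > 0. Set x₀ := (2n−1)/c, k₀ := c/(2n−1), and E₀ := −(1/(2n))·((2n−1)/c)^{2n−1}. Then (c/(2n) − k₀)·x₀^{2n} = E₀ and 1 − x₀²·(E₀/x₀^{2n} − c/(2n))² = 0. Hence the constant function x ≡ x₀ satisfies (x')² = 1 − x²·(E₀/x^{2n} − c/(2n))², so the lower bound E ≥ −(1/(2n))((2n−1)/c)^{2n−1} for the energy is attained (by the cylinder) and is therefore optimal. -/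
/-- Let `n ≥ 1`, `c > 0`, and set `x₀ := (2n−1)/c`, `k₀ := c/(2n−1)`,
`E₀ := −(1/(2n))·((2n−1)/c)^(2n−1)`. Then `(c/(2n) − k₀)·x₀^(2n) = E₀` and
`1 − x₀²·(E₀/x₀^(2n) − c/(2n))² = 0`; hence the constant function `x ≡ x₀` satisfies
`(x')² = 1 − x²·(E₀/x^(2n) − c/(2n))²`, so the energy lower bound is attained (by the
cylinder) and is optimal. -/
theorem energy_lower_bound_optimal
    (n : ℕ) (hn : 1 ≤ n) (c : ℝ) (hc : 0 < c)
    (x₀ k₀ E₀ : ℝ)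
    (hx₀ : x₀ = (2 * (n : ℝ) - 1) / c)
    (hk₀ : k₀ = c / (2 * (n : ℝ) - 1))
    (hE₀ : E₀ = -(1 / (2 * (n : ℝ))) * ((2 * (n : ℝ) - 1) / c) ^ (2 * n - 1)) :
    (c / (2 * (n : ℝ)) - k₀) * x₀ ^ (2 * n) = E₀ ∧
    1 - x₀ ^ 2 * (E₀ / x₀ ^ (2 * n) - c / (2 * (n : ℝ))) ^ 2 = 0 ∧
    ∀ s : ℝ, HasDerivAt (fun _ : ℝ => x₀) 0 s ∧
      (0 : ℝ) ^ 2
        = 1 - x₀ ^ 2 * (E₀ / x₀ ^ (2 * n) - c / (2 * (n : ℝ))) ^ 2 := by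
  have hn1 : (1 : ℝ) ≤ (n : ℝ) := by exact_mod_cast hn
  have hm : (0 : ℝ) < 2 * (n : ℝ) - 1 := by linarith
  have hx0pos : 0 < x₀ := by rw [hx₀]; positivity
  have hnn : (0 : ℝ) < 2 * (n : ℝ) := by linarith
  have hpow : x₀ ^ (2 * n) = x₀ ^ (2 * n - 1) * x₀ := by
    rw [← pow_succ]
    congr 1
    omega
  have hp : (0 : ℝ) < x₀ ^ (2 * n - 1) := pow_pos hx0pos _
  set p := x₀ ^ (2 * n - 1) with hpdef
  have hE₀' : E₀ = -(1 / (2 * (n : ℝ))) * p := by rw [hE₀, hpdef, hx₀]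
  have h1 : (c / (2 * (n : ℝ)) - k₀) * x₀ ^ (2 * n) = E₀ := by
    rw [hpow, hE₀', hk₀, hx₀]
    field_simp
    ring
  have hval : E₀ / x₀ ^ (2 * n) - c / (2 * (n : ℝ)) = -1 / x₀ := by
    rw [hpow, hE₀', hx₀]
    field_simp
    ring
  have h2 : 1 - x₀ ^ 2 * (E₀ / x₀ ^ (2 * n) - c / (2 * (n : ℝ))) ^ 2 = 0 := by
    rw [hval]
    field_simp
    simp
  exact ⟨h1, h2, fun s => ⟨hasDerivAt_const s x₀, by rw [h2]; norm_num⟩⟩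
end

section
/- Let n ≥ 1 be an integer, c > 0 and E ∈ ℝ with E > −(1/(2n))·((2n−1)/c)^{2n−1}. Then the set { x ∈ ℝ : x > 0 and |E − (c/(2n))·x^{2n}| < x^{2n−1} } is nonempty and open; equivalently, there exists a nonempty open interval (a, b) ⊆ (0, ∞) on which 1 − x²·(E/x^{2n} − c/(2n))² > 0. -/
/-- Let `n ≥ 1`, `c > 0` and `E > −(1/(2n))·((2n−1)/c)^(2n−1)`. Then the
set `{x > 0 : |E − (c/(2n))·x^(2n)| < x^(2n−1)}` is nonempty and open; equivalently there
is a nonempty open interval `(a, b) ⊆ (0, ∞)` on which `1 − x²·(E/x^(2n) − c/(2n))² > 0`. -/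
theorem existence_interval_for_energy
    (n : ℕ) (hn : 1 ≤ n) (c E : ℝ) (hc : 0 < c)
    (hE : E > -(1 / (2 * (n : ℝ))) * ((2 * (n : ℝ) - 1) / c) ^ (2 * n - 1)) :
    ({x : ℝ | 0 < x ∧
        |E - c / (2 * (n : ℝ)) * x ^ (2 * n)| < x ^ (2 * n - 1)}.Nonempty ∧
      IsOpen {x : ℝ | 0 < x ∧
        |E - c / (2 * (n : ℝ)) * x ^ (2 * n)| < x ^ (2 * n - 1)}) ∧
    ∃ a b : ℝ, a < b ∧ Set.Ioo a b ⊆ Set.Ioi 0 ∧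
      ∀ x ∈ Set.Ioo a b,
        0 < 1 - x ^ 2 * (E / x ^ (2 * n) - c / (2 * (n : ℝ))) ^ 2 := by
  set S : Set ℝ := {x : ℝ | 0 < x ∧
      |E - c / (2 * (n : ℝ)) * x ^ (2 * n)| < x ^ (2 * n - 1)} with hS
  obtain ⟨k, hk⟩ : ∃ k, 2 * n = k + 1 := ⟨2 * n - 1, by omega⟩
  have hk1 : 2 * n - 1 = k := by omega
  have hn1 : (1 : ℝ) ≤ (n : ℝ) := by exact_mod_cast hn
  have h2n : (0 : ℝ) < 2 * (n : ℝ) := by linarith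
  -- openness
  have hopen : IsOpen S := by
    have : S = Set.Ioi 0 ∩ {x : ℝ | |E - c / (2 * (n : ℝ)) * x ^ (2 * n)| < x ^ (2 * n - 1)} := rfl
    rw [this]
    exact isOpen_Ioi.inter (isOpen_lt ((continuous_const.sub (continuous_const.mul (continuous_pow _))).abs) (continuous_pow _))
  -- nonemptiness
  have hne : S.Nonempty := by
    rcases le_or_gt E 0 with hE0 | hE0
    · -- use x* = (2n-1)/c
      set x : ℝ := (2 * (n : ℝ) - 1) / c with hx
      have hxpos : 0 < x := by
        apply div_pos (by linarith) hc
      refine ⟨x, hxpos, ?_⟩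
      have hxk : (0 : ℝ) < x ^ (2 * n - 1) := pow_pos hxpos _
      have hv : c / (2 * (n : ℝ)) * x ^ (2 * n) = (2 * (n : ℝ) - 1) / (2 * (n : ℝ)) * x ^ (2 * n - 1) := by
        rw [hk1, hk, pow_succ]
        field_simp [hx]
        rw [hx]; field_simp
      have hvpos : 0 < c / (2 * (n : ℝ)) * x ^ (2 * n) := by positivity
      rw [abs_of_nonpos (by linarith)]
      -- need: -(E - v) < x^(2n-1)  i.e.  v - x^(2n-1) < E
      have hrhs : -(1 / (2 * (n : ℝ))) * ((2 * (n : ℝ) - 1) / c) ^ (2 * n - 1)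
          = (2 * (n : ℝ) - 1) / (2 * (n : ℝ)) * x ^ (2 * n - 1) - x ^ (2 * n - 1) := by
        rw [hx]
        field_simp
        ring
      rw [hrhs] at hE
      rw [hv]
      linarith
    · -- E > 0 : choose x with c/(2n) x^(2n) = E
      set x : ℝ := (2 * (n : ℝ) * E / c) ^ ((2 * n : ℝ))⁻¹ with hx
      have hypos : 0 < 2 * (n : ℝ) * E / c := by positivity
      have hxpos : 0 < x := Real.rpow_pos_of_pos hypos _
      have hxpow : x ^ (2 * n) = 2 * (n : ℝ) * E / c := by
        rw [hx]
        rw [show ((2 * n : ℝ))⁻¹ = ((2 * n : ℕ) : ℝ)⁻¹ by push_cast; ring]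
        exact Real.rpow_inv_natCast_pow hypos.le (by omega)
      refine ⟨x, hxpos, ?_⟩
      have : c / (2 * (n : ℝ)) * x ^ (2 * n) = E := by
        rw [hxpow]; field_simp
      rw [this, sub_self, abs_zero]
      exact pow_pos hxpos _
  refine ⟨⟨hne, hopen⟩, ?_⟩
  -- interval
  obtain ⟨x₀, hx₀⟩ := hne
  obtain ⟨ε, hε, hball⟩ := Metric.isOpen_iff.mp hopen x₀ hx₀
  refine ⟨x₀ - ε, x₀ + ε, by linarith, ?_, ?_⟩
  · intro x hx
    rw [← Real.ball_eq_Ioo] at hx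
    exact (hball hx).1
  · intro x hx
    rw [← Real.ball_eq_Ioo] at hx
    obtain ⟨hxpos, habs⟩ := hball hx
    have hxne : x ≠ 0 := ne_of_gt hxpos
    have hxk : (0 : ℝ) < x ^ (2 * n - 1) := pow_pos hxpos _
    have ht : x * (E / x ^ (2 * n) - c / (2 * (n : ℝ)))
        = (E - c / (2 * (n : ℝ)) * x ^ (2 * n)) / x ^ (2 * n - 1) := by
      rw [hk1, hk, pow_succ]
      field_simp
    have habs' : |x * (E / x ^ (2 * n) - c / (2 * (n : ℝ)))| < 1 := by
      rw [ht, abs_div, abs_of_pos hxk, div_lt_one hxk]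
      exact habs
    have hsq : (x * (E / x ^ (2 * n) - c / (2 * (n : ℝ)))) ^ 2 < 1 :=
      (sq_lt_one_iff_abs_lt_one _).mpr habs'
    have : x ^ 2 * (E / x ^ (2 * n) - c / (2 * (n : ℝ))) ^ 2
        = (x * (E / x ^ (2 * n) - c / (2 * (n : ℝ)))) ^ 2 := by ring
    rw [this]
    linarith
end

section
/- Let n ≥ 1 be an integer, c > 0 and E ∈ ℝ with E > −(1/(2n))·((2n−1)/c)^{2n−1}. Then there exist a nonempty open interval I ⊆ ℝ and a differentiable, strictly increasing function F : I → ℝ with F > 0 on I such that for every s ∈ I: F'(s)² = 1 − F(s)²·(E/F(s)^{2n} − c/(2n))² and F'(s) > 0. -/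
lemma exists_good_x0 (n : ℕ) (hn : 1 ≤ n) (c E : ℝ) (hc : 0 < c)
    (hE : E > -(1 / (2 * (n : ℝ))) * ((2 * (n : ℝ) - 1) / c) ^ (2 * n - 1)) :
    ∃ x0 : ℝ, 0 < x0 ∧
      0 < 1 - x0 ^ 2 * (E / x0 ^ (2 * n) - c / (2 * (n : ℝ))) ^ 2 := by
  have hn1 : (1 : ℝ) ≤ (n : ℝ) := by exact_mod_cast hn
  have h2n : (0 : ℝ) < 2 * (n : ℝ) := by linarith
  rcases lt_trichotomy E 0 with hEneg | hE0 | hEpos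
  · -- E < 0
    set B : ℝ := (2 * (n : ℝ) - 1) / c with hB
    have hBpos : 0 < B := div_pos (by linarith) hc
    set a : ℝ := 2 * (n : ℝ) * (2 * (n : ℝ) - 1) * (-E) / c with ha
    have h2n1 : (0:ℝ) < 2 * (n : ℝ) - 1 := by linarith
    have hapos : 0 < a :=
      div_pos (mul_pos (mul_pos h2n h2n1) (by linarith)) hc
    set x0 : ℝ := a ^ (((2 * n : ℕ) : ℝ))⁻¹ with hx0
    have hx0pos : 0 < x0 := Real.rpow_pos_of_pos hapos _
    have hpow : x0 ^ (2 * n) = a :=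
      Real.rpow_inv_natCast_pow hapos.le (by omega)
    have hkey : a < B ^ (2 * n) := by
      have hmE : -E < 1 / (2 * (n : ℝ)) * B ^ (2 * n - 1) := by linarith
      have hfac : (0:ℝ) < 2 * (n : ℝ) * (2 * (n : ℝ) - 1) / c := by
        apply div_pos _ hc; nlinarith
      have h1 : a = 2 * (n : ℝ) * (2 * (n : ℝ) - 1) / c * (-E) := by
        rw [ha]; ring
      have h2 : 2 * (n : ℝ) * (2 * (n : ℝ) - 1) / c * (1 / (2 * (n : ℝ)) * B ^ (2 * n - 1))
          = B ^ (2 * n) := by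
        have h2n' : 2 * n = (2 * n - 1) + 1 := by omega
        rw [h2n', pow_succ, hB]
        field_simp
        ring_nf
        congr 1
        omega
      calc a = 2 * (n : ℝ) * (2 * (n : ℝ) - 1) / c * (-E) := h1
        _ < 2 * (n : ℝ) * (2 * (n : ℝ) - 1) / c * (1 / (2 * (n : ℝ)) * B ^ (2 * n - 1)) :=
            by exact mul_lt_mul_of_pos_left hmE hfac
        _ = B ^ (2 * n) := h2
    have hx0B : x0 < B := by
      have : x0 < (B ^ (2 * n)) ^ (((2 * n : ℕ) : ℝ))⁻¹ := by
        apply Real.rpow_lt_rpow hapos.le hkey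
        positivity
      rwa [Real.pow_rpow_inv_natCast hBpos.le (by omega)] at this
    refine ⟨x0, hx0pos, ?_⟩
    have hEa0 : E / a = -(c / (2 * (n : ℝ) * (2 * (n : ℝ) - 1))) := by
      rw [div_eq_iff (ne_of_gt hapos), ha]
      field_simp
    have hEa : E / a - c / (2 * (n : ℝ)) = -(c / (2 * (n : ℝ) - 1)) := by
      rw [hEa0]
      field_simp
      ring
    rw [hpow, hEa]
    have h1 : x0 ^ 2 * (-(c / (2 * (n : ℝ) - 1))) ^ 2 = (x0 * (c / (2 * (n : ℝ) - 1))) ^ 2 := by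
      ring
    rw [h1]
    have h2 : 0 ≤ x0 * (c / (2 * (n : ℝ) - 1)) :=
      mul_nonneg hx0pos.le (div_pos hc h2n1).le
    have h3 : x0 * (c / (2 * (n : ℝ) - 1)) < 1 := by
      rw [hB] at hx0B
      have h4 : (2 * (n : ℝ) - 1) / c * (c / (2 * (n : ℝ) - 1)) = 1 := by
        field_simp
      have h5 := mul_lt_mul_of_pos_right hx0B (div_pos hc h2n1)
      rwa [h4] at h5
    nlinarith
  · -- E = 0
    refine ⟨(n : ℝ) / c, div_pos (by linarith) hc, ?_⟩
    rw [hE0]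
    rw [zero_div]
    have h1 : ((n : ℝ) / c) ^ 2 * (0 - c / (2 * (n : ℝ))) ^ 2 = (1 / 2 : ℝ) ^ 2 := by
      field_simp
      ring
    rw [h1]; norm_num
  · -- E > 0
    set a : ℝ := 2 * (n : ℝ) * E / c with ha
    have hapos : 0 < a := by apply div_pos _ hc; nlinarith
    set x0 : ℝ := a ^ (((2 * n : ℕ) : ℝ))⁻¹ with hx0
    have hx0pos : 0 < x0 := Real.rpow_pos_of_pos hapos _
    have hpow : x0 ^ (2 * n) = a :=
      Real.rpow_inv_natCast_pow hapos.le (by omega)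
    refine ⟨x0, hx0pos, ?_⟩
    rw [hpow]
    have : E / a - c / (2 * (n : ℝ)) = 0 := by
      rw [ha]; field_simp; ring
    rw [this]
    norm_num


/-- Let `n ≥ 1`, `c > 0` and `E > −(1/(2n))·((2n−1)/c)^(2n−1)`. Then
there exist a nonempty open interval `I = Ioo a b` and a differentiable, strictly
increasing `F : I → ℝ` with `F > 0` on `I` such that for every `s ∈ I`:
`F'(s)² = 1 − F(s)²·(E/F(s)^(2n) − c/(2n))²` and `F'(s) > 0`. -/
theorem existence_generating_curve_cmc
    (n : ℕ) (hn : 1 ≤ n) (c E : ℝ) (hc : 0 < c)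
    (hE : E > -(1 / (2 * (n : ℝ))) * ((2 * (n : ℝ) - 1) / c) ^ (2 * n - 1)) :
    ∃ a b : ℝ, a < b ∧ ∃ F F' : ℝ → ℝ,
      StrictMonoOn F (Set.Ioo a b) ∧
      ∀ s ∈ Set.Ioo a b,
        HasDerivAt F (F' s) s ∧ 0 < F s ∧ 0 < F' s ∧
        F' s ^ 2 = 1 - F s ^ 2 * (E / F s ^ (2 * n) - c / (2 * (n : ℝ))) ^ 2 := by
  obtain ⟨x0, hx0pos, hQ0⟩ := exists_good_x0 n hn c E hc hE
  set Q : ℝ → ℝ := fun x => 1 - x ^ 2 * (E / x ^ (2 * n) - c / (2 * (n : ℝ))) ^ 2 with hQdef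
  set v : ℝ → ℝ := fun x => Real.sqrt (Q x) with hvdef
  have hQc1 : ContDiffAt ℝ 1 Q x0 := by
    have hd : ContDiffAt ℝ 1 (fun x : ℝ => E / x ^ (2 * n)) x0 :=
      contDiffAt_const.div (contDiffAt_id.pow _) (pow_ne_zero _ hx0pos.ne')
    exact contDiffAt_const.sub
      (((contDiffAt_id.pow 2)).mul ((hd.sub contDiffAt_const).pow 2))
  have hvc1 : ContDiffAt ℝ 1 v x0 :=
    (Real.contDiffAt_sqrt hQ0.ne').comp x0 hQc1
  have hQcont : ContinuousOn Q (Set.Ioi (0 : ℝ)) := by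
    have hd : ContinuousOn (fun x : ℝ => E / x ^ (2 * n)) (Set.Ioi (0 : ℝ)) :=
      continuousOn_const.div ((continuous_pow _).continuousOn)
        (fun x hx => pow_ne_zero _ (ne_of_gt hx))
    exact continuousOn_const.sub
      ((continuousOn_id.pow 2).mul ((hd.sub continuousOn_const).pow 2))
  set U : Set ℝ := Set.Ioi (0 : ℝ) ∩ Q ⁻¹' Set.Ioi (0 : ℝ) with hUdef
  have hUopen : IsOpen U := hQcont.isOpen_inter_preimage isOpen_Ioi isOpen_Ioi
  have hx0U : x0 ∈ U := ⟨hx0pos, hQ0⟩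
  obtain ⟨f, hf0, ε, hε, hf⟩ :=
    ContDiffAt.exists_forall_mem_closedBall_exists_eq_forall_mem_Ioo_hasDerivAt₀ (f := v) (x₀ := x0) hvc1 0
  have h0mem : (0 : ℝ) ∈ Set.Ioo (0 - ε) (0 + ε) := by
    constructor <;> simp [hε]
  have hfc : ContinuousAt f 0 := (hf 0 h0mem).continuousAt
  have hnhds : f ⁻¹' U ∩ Set.Ioo (0 - ε) (0 + ε) ∈ nhds (0 : ℝ) := by
    refine Filter.inter_mem ?_ (Ioo_mem_nhds h0mem.1 h0mem.2)
    exact hfc.preimage_mem_nhds (hUopen.mem_nhds (hf0 ▸ hx0U))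
  obtain ⟨a, b, hab, hsub⟩ := mem_nhds_iff_exists_Ioo_subset.mp hnhds
  refine ⟨a, b, lt_trans hab.1 hab.2, f, fun s => v (f s), ?_, ?_⟩
  · refine strictMonoOn_of_deriv_pos (convex_Ioo a b)
      (fun s hs => ((hf s (hsub hs).2).continuousAt.continuousWithinAt)) ?_
    intro s hs
    rw [interior_Ioo] at hs
    rw [(hf s (hsub hs).2).deriv]
    exact Real.sqrt_pos.mpr (hsub hs).1.2
  · intro s hs
    obtain ⟨⟨hfs1, hfs2⟩, hsε⟩ := hsub hs
    exact ⟨hf s hsε, hfs1, Real.sqrt_pos.mpr hfs2, Real.sq_sqrt (le_of_lt hfs2)⟩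
end

section
/- Let n ≥ 1 be an integer and E ∈ ℝ. Then there exist a nonempty open interval I ⊆ ℝ and a differentiable, strictly increasing function F : I → ℝ such that F(s)^{2n−1} > |E| for every s ∈ I, and for every s ∈ I: F'(s)² = 1 − (E/F(s)^{2n−1})² and F'(s) > 0. -/
open Set

/-- Let `n ≥ 1` and `E ∈ ℝ`. Then there exist a nonempty open interval
`I = Ioo a b` and a differentiable, strictly increasing `F : I → ℝ` with
`F(s)^(2n−1) > |E|` on `I` such that for every `s ∈ I`:
`F'(s)² = 1 − (E/F(s)^(2n−1))²` and `F'(s) > 0`. -/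
theorem existence_generating_curve_minimal
    (n : ℕ) (hn : 1 ≤ n) (E : ℝ) :
    ∃ a b : ℝ, a < b ∧ ∃ F F' : ℝ → ℝ,
      StrictMonoOn F (Set.Ioo a b) ∧
      ∀ s ∈ Set.Ioo a b,
        |E| < F s ^ (2 * n - 1) ∧
        HasDerivAt F (F' s) s ∧ 0 < F' s ∧
        F' s ^ 2 = 1 - (E / F s ^ (2 * n - 1)) ^ 2 := by
  set m := 2 * n - 1 with hm
  have hm1 : 1 ≤ m := by omega
  set x₀ : ℝ := |E| + 1 with hx₀
  have hx₀1 : (1:ℝ) ≤ x₀ := by have := abs_nonneg E; linarith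
  have hEx₀ : |E| < x₀ ^ m := by
    calc |E| < x₀ := by simp [hx₀]
    _ ≤ x₀ ^ m := le_self_pow₀ (by linarith) (by omega)
  -- key: for x with |E| < x^m, the radicand is positive
  have key : ∀ x : ℝ, |E| < x ^ m → 0 < 1 - (E / x ^ m) ^ 2 := by
    intro x hx
    have hx0 : 0 < x ^ m := lt_of_le_of_lt (abs_nonneg E) hx
    have : |E / x ^ m| < 1 := by
      rw [abs_div, abs_of_pos hx0, div_lt_one hx0]; exact hx
    nlinarith [abs_nonneg (E / x ^ m), sq_abs (E / x ^ m)]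
  set v : ℝ → ℝ := fun x => Real.sqrt (1 - (E / x ^ m) ^ 2) with hv
  have hg : ContDiffAt ℝ 1 (fun x : ℝ => 1 - (E / x ^ m) ^ 2) x₀ := by
    have : ContDiffAt ℝ 1 (fun x : ℝ => E / x ^ m) x₀ :=
      ContDiffAt.div contDiffAt_const (contDiffAt_id.pow m)
        (by positivity)
    exact contDiffAt_const.sub (this.pow 2)
  have hvc : ContDiffAt ℝ 1 v x₀ :=
    (Real.contDiffAt_sqrt (ne_of_gt (key x₀ hEx₀))).comp x₀ hg
  obtain ⟨f, hf0, ε, hε, hf⟩ := ContDiffAt.exists_forall_mem_closedBall_exists_eq_forall_mem_Ioo_hasDerivAt₀ hvc 0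
  -- eventually |E| < f t ^ m
  have hcf : ContinuousAt f 0 := (hf 0 ⟨by linarith, by linarith⟩).continuousAt
  have hev : ∀ᶠ t in nhds (0:ℝ), |E| < f t ^ m := by
    have : ContinuousAt (fun t => f t ^ m) 0 := hcf.pow m
    have := continuousAt_const.eventually_lt this (by rw [hf0]; exact hEx₀)
    filter_upwards [this] with t ht using ht
  obtain ⟨δ, hδ, hδ'⟩ := Metric.eventually_nhds_iff.mp hev
  set r := min ε δ with hr
  have hr0 : 0 < r := lt_min hε hδ
  refine ⟨-r, r, by linarith, f, fun s => v (f s), ?_, ?_⟩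
  · -- strict mono
    have hsub : Ioo (-r) r ⊆ Ioo (0 - ε) (0 + ε) := by
      intro t ht
      constructor
      · have := ht.1; have : -ε ≤ -r := by simp [hr]
        simp only [zero_sub]; linarith [ht.1]
      · simp only [zero_add]; exact lt_of_lt_of_le ht.2 (min_le_left _ _)
    apply strictMonoOn_of_deriv_pos (convex_Ioo _ _)
    · intro t ht
      exact (hf t (hsub ht)).continuousAt.continuousWithinAt
    · intro t ht
      rw [interior_Ioo] at ht
      rw [(hf t (hsub ht)).deriv]
      apply Real.sqrt_pos.mpr
      apply key
      apply hδ'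
      simp only [Real.dist_eq, sub_zero]
      exact lt_of_lt_of_le (abs_lt.mpr ⟨ht.1, ht.2⟩) (min_le_right _ _)
  · intro s hs
    have hs' : s ∈ Ioo (0 - ε) (0 + ε) := by
      constructor
      · simp only [zero_sub]
        have : -ε ≤ -r := by simp [hr]
        linarith [hs.1]
      · simp only [zero_add]; exact lt_of_lt_of_le hs.2 (min_le_left _ _)
    have hfs : |E| < f s ^ m := by
      apply hδ'
      simp only [Real.dist_eq, sub_zero]
      exact lt_of_lt_of_le (abs_lt.mpr ⟨hs.1, hs.2⟩) (min_le_right _ _)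
    have hrad := key _ hfs
    refine ⟨hfs, hf s hs', Real.sqrt_pos.mpr hrad, Real.sq_sqrt hrad.le⟩
end

section
/- Let n ≥ 1 be an integer, c ∈ ℝ and L > 0. Then there do not exist a twice continuously differentiable function x : [0, L] → ℝ and a continuous function k : [0, L] → ℝ such that all of the following hold: x > 0 on [0, L]; x(0) = x(L); x'(0) = x'(L); x'' = ((2n−1)·k² − c·k)·x on [0, L]; (x')² = 1 − x²·k² on [0, L]; and ∫₀ᴸ k·x² ds = 0. -/
/-- Let `n ≥ 1`, `c ∈ ℝ` and `L > 0`. There are no `C²` function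
`x : [0, L] → ℝ` and continuous `k : [0, L] → ℝ` with `x > 0`, `x(0) = x(L)`,
`x'(0) = x'(L)`, `x'' = ((2n−1)·k² − c·k)·x`, `(x')² = 1 − x²·k²` on `[0, L]`, and
`∫₀ᴸ k·x² ds = 0`. -/
theorem no_closed_generating_curve
    (n : ℕ) (hn : 1 ≤ n) (c L : ℝ) (hL : 0 < L) :
    ¬ ∃ x x' x'' k : ℝ → ℝ,
      (∀ s ∈ Set.Icc 0 L, HasDerivWithinAt x (x' s) (Set.Icc 0 L) s) ∧
      (∀ s ∈ Set.Icc 0 L, HasDerivWithinAt x' (x'' s) (Set.Icc 0 L) s) ∧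
      ContinuousOn x'' (Set.Icc 0 L) ∧
      ContinuousOn k (Set.Icc 0 L) ∧
      (∀ s ∈ Set.Icc 0 L, 0 < x s) ∧
      x 0 = x L ∧ x' 0 = x' L ∧
      (∀ s ∈ Set.Icc 0 L,
        x'' s = ((2 * (n : ℝ) - 1) * k s ^ 2 - c * k s) * x s) ∧
      (∀ s ∈ Set.Icc 0 L, x' s ^ 2 = 1 - x s ^ 2 * k s ^ 2) ∧
      ∫ s in (0 : ℝ)..L, k s * x s ^ 2 = 0 := by
  rintro ⟨x, x', x'', k, hdx, hdx', hx''c, hkc, hxpos, hx0L, hx'0L, hode, hfirst, hint0⟩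
  set I := Set.Icc (0:ℝ) L with hI
  have huIcc : Set.uIcc (0:ℝ) L = I := Set.uIcc_of_le hL.le
  have hxc : ContinuousOn x I := fun s hs => (hdx s hs).continuousWithinAt
  have hx'c : ContinuousOn x' I := fun s hs => (hdx' s hs).continuousWithinAt
  -- interval integrability of various continuous functions
  have hiA : IntervalIntegrable (fun s => x' s ^ 2) MeasureTheory.volume 0 L := by
    apply ContinuousOn.intervalIntegrable; rw [huIcc]; exact hx'c.pow 2
  have hiB : IntervalIntegrable (fun s => k s ^ 2 * x s ^ 2) MeasureTheory.volume 0 L := by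
    apply ContinuousOn.intervalIntegrable; rw [huIcc]; exact (hkc.pow 2).mul (hxc.pow 2)
  have hiK : IntervalIntegrable (fun s => k s * x s ^ 2) MeasureTheory.volume 0 L := by
    apply ContinuousOn.intervalIntegrable; rw [huIcc]; exact hkc.mul (hxc.pow 2)
  have hiXX'' : IntervalIntegrable (fun s => x s * x'' s) MeasureTheory.volume 0 L := by
    apply ContinuousOn.intervalIntegrable; rw [huIcc]; exact hxc.mul hx''c
  -- FTC for F = x * x'
  have hFTC : ∫ s in (0:ℝ)..L, (x' s ^ 2 + x s * x'' s)
      = x L * x' L - x 0 * x' 0 := by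
    apply intervalIntegral.integral_eq_sub_of_hasDerivAt_of_le hL.le
    · exact (hxc.mul hx'c)
    · intro s hs
      have hsI : s ∈ I := Set.mem_Icc_of_Ioo hs
      have h := ((hdx s hsI).mul (hdx' s hsI)).hasDerivAt
        (Icc_mem_nhds hs.1 hs.2)
      convert h using 1
      · rfl
      ring
    · exact hiA.add hiXX''
  have hbd : x L * x' L - x 0 * x' 0 = 0 := by rw [← hx0L, ← hx'0L]; ring
  -- rewrite x * x'' using the ODE
  have hXX'' : ∫ s in (0:ℝ)..L, x s * x'' s
      = ∫ s in (0:ℝ)..L, ((2 * (n:ℝ) - 1) * (k s ^ 2 * x s ^ 2) - c * (k s * x s ^ 2)) := by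
    apply intervalIntegral.integral_congr
    intro s hs
    rw [huIcc] at hs
    show x s * x'' s = _
    rw [hode s hs]; ring
  have hsplit : ∫ s in (0:ℝ)..L, ((2 * (n:ℝ) - 1) * (k s ^ 2 * x s ^ 2) - c * (k s * x s ^ 2))
      = (2 * (n:ℝ) - 1) * (∫ s in (0:ℝ)..L, k s ^ 2 * x s ^ 2)
        - c * (∫ s in (0:ℝ)..L, k s * x s ^ 2) := by
    rw [intervalIntegral.integral_sub (hiB.const_mul _) (hiK.const_mul _),
      intervalIntegral.integral_const_mul, intervalIntegral.integral_const_mul]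
  set A := ∫ s in (0:ℝ)..L, x' s ^ 2 with hA
  set B := ∫ s in (0:ℝ)..L, k s ^ 2 * x s ^ 2 with hB
  have key : A + (2 * (n:ℝ) - 1) * B = 0 := by
    have := hFTC
    rw [intervalIntegral.integral_add hiA hiXX'', hXX'', hsplit, hbd, hint0] at this
    linarith [this]
  -- L = A + B
  have hLen : A + B = L := by
    have h1 : ∫ s in (0:ℝ)..L, (x' s ^ 2 + x s ^ 2 * k s ^ 2) = L := by
      have : ∀ s ∈ Set.uIcc (0:ℝ) L, x' s ^ 2 + x s ^ 2 * k s ^ 2 = (1:ℝ) := by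
        intro s hs; rw [huIcc] at hs
        show x' s ^ 2 + x s ^ 2 * k s ^ 2 = (1:ℝ)
        have := hfirst s hs; linarith
      rw [intervalIntegral.integral_congr this]
      simp
    have hB' : (∫ s in (0:ℝ)..L, x s ^ 2 * k s ^ 2) = B := by
      rw [hB]; apply intervalIntegral.integral_congr; intro s hs; show x s ^ 2 * k s ^ 2 = k s ^ 2 * x s ^ 2; ring
    rw [intervalIntegral.integral_add hiA ?_ ] at h1
    · rw [hB'] at h1; exact h1
    · apply ContinuousOn.intervalIntegrable; rw [huIcc]; exact (hxc.pow 2).mul (hkc.pow 2)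
  have hA0 : 0 ≤ A := intervalIntegral.integral_nonneg hL.le (fun s _ => sq_nonneg _)
  have hB0 : 0 ≤ B := intervalIntegral.integral_nonneg hL.le
    (fun s _ => mul_nonneg (sq_nonneg _) (sq_nonneg _))
  have hn' : (1:ℝ) ≤ (n:ℝ) := by exact_mod_cast hn
  nlinarith [key, hLen, hA0, hB0, hn', hL]
end

section
/- Let c > 0 and E ∈ ℝ with 2cE + 1 ≥ 0. Define u(s) := (2√(2cE+1)/c²)·sin(c·s) + (2cE+2)/c². Then u(s) ≥ 0 for every s ∈ ℝ, and on any open interval where u > 0, the function x := √u is differentiable and satisfies x'(s)² = 1 − x(s)²·(E/x(s)² − c/2)². -/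
/-- Let `c > 0` and `E ∈ ℝ` with `2cE + 1 ≥ 0`, and define
`u(s) := (2√(2cE+1)/c²)·sin(c·s) + (2cE+2)/c²`. Then `u ≥ 0` on `ℝ`, and on any open
interval where `u > 0`, the function `x := √u` is differentiable and satisfies
`x'(s)² = 1 − x(s)²·(E/x(s)² − c/2)²`. -/
theorem explicit_cmc_solution_H1
    (c E : ℝ) (hc : 0 < c) (hE : 0 ≤ 2 * c * E + 1)
    (u : ℝ → ℝ)
    (hu : u = fun s =>
      2 * Real.sqrt (2 * c * E + 1) / c ^ 2 * Real.sin (c * s)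
        + (2 * c * E + 2) / c ^ 2) :
    (∀ s : ℝ, 0 ≤ u s) ∧
    ∀ a b : ℝ, (∀ s ∈ Set.Ioo a b, 0 < u s) →
      ∀ s ∈ Set.Ioo a b, ∃ d : ℝ,
        HasDerivAt (fun s => Real.sqrt (u s)) d s ∧
        d ^ 2 = 1 - Real.sqrt (u s) ^ 2
            * (E / Real.sqrt (u s) ^ 2 - c / 2) ^ 2 := by
  set A := Real.sqrt (2 * c * E + 1) with hA
  have hA0 : 0 ≤ A := Real.sqrt_nonneg _
  have hA2 : A ^ 2 = 2 * c * E + 1 := Real.sq_sqrt hE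
  have hc2 : (0:ℝ) < c ^ 2 := by positivity
  constructor
  · intro s
    have hs1 : -1 ≤ Real.sin (c * s) := Real.neg_one_le_sin _
    have hnum : 0 ≤ 2 * A * Real.sin (c * s) + (2 * c * E + 2) := by
      nlinarith [sq_nonneg (A - 1)]
    simp only [hu]
    have : 2 * A / c ^ 2 * Real.sin (c * s) + (2 * c * E + 2) / c ^ 2
        = (2 * A * Real.sin (c * s) + (2 * c * E + 2)) / c ^ 2 := by ring
    rw [this]
    exact div_nonneg hnum hc2.le
  · intro a b hpos s hs
    have hP : 0 < u s := hpos s hs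
    have h1 : HasDerivAt (fun s : ℝ => c * s) c s := by
      simpa using (hasDerivAt_id s).const_mul c
    have h2 : HasDerivAt (fun s : ℝ => Real.sin (c * s)) (Real.cos (c * s) * c) s :=
      (Real.hasDerivAt_sin (c * s)).comp s h1
    have hu' : HasDerivAt u (2 * A / c ^ 2 * (Real.cos (c * s) * c)) s := by
      rw [hu]; exact (h2.const_mul _).add_const _
    have hd := hu'.sqrt hP.ne'
    refine ⟨_, hd, ?_⟩
    have hsq : Real.sqrt (u s) ^ 2 = u s := Real.sq_sqrt hP.le
    have h4 : (2 * Real.sqrt (u s)) ^ 2 = 4 * u s := by rw [mul_pow, hsq]; ring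
    rw [hsq, div_pow, h4]
    have hSC : Real.sin (c * s) ^ 2 + Real.cos (c * s) ^ 2 = 1 :=
      Real.sin_sq_add_cos_sq _
    have hus : u s = 2 * A / c ^ 2 * Real.sin (c * s) + (2 * c * E + 2) / c ^ 2 := by
      rw [hu]
    have key : (2 * A / c ^ 2 * (Real.cos (c * s) * c)) ^ 2
        = 4 * u s - (2 * E - c * u s) ^ 2 := by
      rw [hus]
      field_simp
      linear_combination (2 * A ^ 2) * hSC + 2 * hA2
    rw [key]
    field_simp
    ring
end

section
/- Let a be a real number with 0 < a ≤ 1 and define, for s > 0, x(s) := a·s and t(s) := −(a·√(1−a²)/2)·s². Then on (0, ∞): the normalization (x·x')² + (t')² = x² holds (so s is the horizontal arc-length); the functions α := x'/x and k := −t'/x² are given by α(s) = 1/s and k(s) = √(1−a²)/(a·s); and l := k + (α·k' − k·α')·x² satisfies l = k on (0, ∞). -/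
/-- Let `0 < a ≤ 1`, `x(s) := a·s`, `t(s) := −(a·√(1−a²)/2)·s²` on
`(0, ∞)`. Then the normalization `(x·x')² + (t')² = x²` holds; the invariants
`α := x'/x` and `k := −t'/x²` are `α(s) = 1/s` and `k(s) = √(1−a²)/(a·s)`; and
`l := k + (α·k' − k·α')·x²` satisfies `l = k` on `(0, ∞)`. -/
theorem cone_example_l_eq_k
    (a : ℝ) (ha0 : 0 < a) (ha1 : a ≤ 1)
    (x t : ℝ → ℝ)
    (hxdef : x = fun s => a * s)
    (htdef : t = fun s => -(a * Real.sqrt (1 - a ^ 2) / 2) * s ^ 2)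
    (x' t' : ℝ → ℝ)
    (hx : ∀ s ∈ Set.Ioi (0 : ℝ), HasDerivAt x (x' s) s)
    (ht : ∀ s ∈ Set.Ioi (0 : ℝ), HasDerivAt t (t' s) s)
    (α k : ℝ → ℝ)
    (hα : ∀ s ∈ Set.Ioi (0 : ℝ), α s = x' s / x s)
    (hk : ∀ s ∈ Set.Ioi (0 : ℝ), k s = -t' s / x s ^ 2)
    (α' k' : ℝ → ℝ)
    (hα' : ∀ s ∈ Set.Ioi (0 : ℝ), HasDerivAt α (α' s) s)
    (hk' : ∀ s ∈ Set.Ioi (0 : ℝ), HasDerivAt k (k' s) s) :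
    ∀ s ∈ Set.Ioi (0 : ℝ),
      (x s * x' s) ^ 2 + t' s ^ 2 = x s ^ 2 ∧
      α s = 1 / s ∧
      k s = Real.sqrt (1 - a ^ 2) / (a * s) ∧
      k s + (α s * k' s - k s * α' s) * x s ^ 2 = k s := by
  set c : ℝ := Real.sqrt (1 - a ^ 2) with hcdef
  have h1a : (0:ℝ) ≤ 1 - a ^ 2 := by nlinarith
  have hc2 : c ^ 2 = 1 - a ^ 2 := Real.sq_sqrt h1a
  -- x' and t' on Ioi
  have hx' : ∀ s ∈ Set.Ioi (0:ℝ), x' s = a := by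
    intro s hs
    have h1 : HasDerivAt x a s := by
      rw [hxdef]
      simpa using (hasDerivAt_id s).const_mul a
    exact (hx s hs).unique h1
  have ht' : ∀ s ∈ Set.Ioi (0:ℝ), t' s = -(a * c) * s := by
    intro s hs
    have h1 : HasDerivAt t (-(a * c) * s) s := by
      rw [htdef]
      have := (hasDerivAt_pow 2 s).const_mul (-(a * c / 2))
      convert this using 1
      case e'_9 => ring
      all_goals rfl
    exact (ht s hs).unique h1
  have hαval : ∀ s ∈ Set.Ioi (0:ℝ), α s = 1 / s := by
    intro s hs
    have hs0 : (0:ℝ) < s := hs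
    rw [hα s hs, hx' s hs, hxdef]
    field_simp
  have hkval : ∀ s ∈ Set.Ioi (0:ℝ), k s = c / (a * s) := by
    intro s hs
    have hs0 : (0:ℝ) < s := hs
    rw [hk s hs, ht' s hs, hxdef]
    field_simp
  intro s hs
  have hs0 : (0:ℝ) < s := hs
  have hsne : s ≠ 0 := ne_of_gt hs0
  have hane : a ≠ 0 := ne_of_gt ha0
  refine ⟨?_, hαval s hs, hkval s hs, ?_⟩
  · rw [hx' s hs, ht' s hs, hxdef]
    simp only
    linear_combination a ^ 2 * s ^ 2 * hc2
  · -- compute α' and k' via eventual equality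
    have hev : Set.EqOn α (fun u => 1 / u) (Set.Ioi 0) := fun u hu => hαval u hu
    have hα's : HasDerivAt α (-(s ^ 2)⁻¹) s := by
      have h1 : HasDerivAt (fun u : ℝ => 1 / u) (-(s ^ 2)⁻¹) s := by
        simpa [one_div] using hasDerivAt_inv hsne
      exact h1.congr_of_eventuallyEq
        ((isOpen_Ioi.eventually_mem hs).mono fun u hu => hev hu)
    have hα'val : α' s = -(s ^ 2)⁻¹ := (hα' s hs).unique hα's
    have hevk : Set.EqOn k (fun u => c / a * u⁻¹) (Set.Ioi 0) := by
      intro u hu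
      have hu0 : (0:ℝ) < u := hu
      rw [hkval u hu]
      field_simp
    have hk's : HasDerivAt k (c / a * -(s ^ 2)⁻¹) s := by
      have h1 : HasDerivAt (fun u : ℝ => c / a * u⁻¹) (c / a * -(s ^ 2)⁻¹) s :=
        (hasDerivAt_inv hsne).const_mul (c / a)
      exact h1.congr_of_eventuallyEq
        ((isOpen_Ioi.eventually_mem hs).mono fun u hu => hevk hu)
    have hk'val : k' s = c / a * -(s ^ 2)⁻¹ := (hk' s hs).unique hk's
    rw [hα'val, hk'val, hαval s hs, hkval s hs]
    field_simp
    ring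
end
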